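/- Let f : (a, b) → ℝ be strictly increasing and absolutely continuous on compact subintervals, and suppose the set {r ∈ (a,b) : f'(r) = 0} has Lebesgue measure zero. Then the inverse function f⁻¹ : (f(a+), f(b-)) → (a, b) is also strictly increasing and absolutely continuous on compact subintervals. -/

import Mathlib

open MeasureTheory Set

/-!
The inverse `g` is the distribution function of the push-forward `ν = f₊(λ|(a,b))`, since
`ν (f x, f y] = y - x`; so `g` is absolutely continuous with derivative the density of `ν`
as soon as `ν ≪ λ`. By Lebesgue differentiation `f' = deriv f` a.e., and the one-dimensional area
formula `∫_E |f'| = λ (f '' E)` shows that the part of `f⁻¹ N` where `f' ≠ 0` is null whenever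
`N` is. Hence `ν ≪ λ` exactly because `{f' = 0}` is null.
-/

theorem ae_hasDerivAt_of_sub_eq_intervalIntegral {E : Type*} [NormedAddCommGroup E]
    [NormedSpace ℝ E] [CompleteSpace E] {f f' : ℝ → E} {a b : ℝ}
    (hloc : ∀ x ∈ Ioo a b, ∀ y ∈ Ioo a b, x ≤ y → IntegrableOn f' (Icc x y))
    (hf : ∀ x ∈ Ioo a b, ∀ y ∈ Ioo a b, x ≤ y → f y - f x = ∫ t in x..y, f' t) :
    ∀ᵐ x, x ∈ Ioo a b → HasDerivAt f (f' x) x := by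
  simp only [ae_iff, Classical.not_imp]
  refine measure_null_of_locally_null _ fun x ⟨hx, _⟩ ↦ ?_
  obtain ⟨c, hac, hcx⟩ := exists_between hx.1
  obtain ⟨d, hxd, hdb⟩ := exists_between hx.2
  have hcI : c ∈ Ioo a b := ⟨hac, hcx.trans hx.2⟩
  have hdI : d ∈ Ioo a b := ⟨hx.1.trans hxd, hdb⟩
  have hint : IntervalIntegrable f' volume c d :=
    (intervalIntegrable_iff_integrableOn_Icc_of_le (hcx.trans hxd).le).2
      (hloc c hcI d hdI (hcx.trans hxd).le)
  refine ⟨_, inter_mem_nhdsWithin _ (Ioo_mem_nhds hcx hxd),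
    measure_mono_null ?_ (ae_iff.1 hint.ae_hasDerivAt_integral)⟩
  rintro y ⟨⟨-, hy⟩, hycd⟩ hP
  have hcd : Ioo c d ⊆ uIcc c d := Ioo_subset_Icc_self.trans Icc_subset_uIcc
  refine hy (((hP (hcd hycd) c left_mem_uIcc).const_add (f c)).congr_of_eventuallyEq ?_)
  filter_upwards [Ioo_mem_nhds hycd.1 hycd.2] with z hz
  rw [← hf c hcI z ⟨hac.trans hz.1, hz.2.trans hdb⟩ hz.1.le, add_sub_cancel]

theorem volume_eq_zero_of_volume_image_eq_zero {f : ℝ → ℝ} {s : Set ℝ} (hs : MeasurableSet s)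
    (hf : InjOn f s) (hd : ∀ x ∈ s, DifferentiableAt ℝ f x) (hd₀ : ∀ x ∈ s, deriv f x ≠ 0)
    (himage : volume (f '' s) = 0) : volume s = 0 := by
  have hzero : ∫⁻ x in s, ENNReal.ofReal |deriv f x| = 0 := by
    simpa [himage] using (lintegral_image_eq_lintegral_abs_deriv_mul hs
      (fun x hx ↦ (hd x hx).hasDerivAt.hasDerivWithinAt) hf 1).symm
  rw [lintegral_eq_zero_iff (measurable_deriv f).abs.ennreal_ofReal,
    Filter.EventuallyEq, ae_restrict_iff' hs] at hzero
  refine measure_mono_null (fun x hx ↦ ?_) (ae_iff.1 hzero)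
  simpa [hx] using hd₀ x hx

theorem MonotoneOn.measurableSet_inter_preimage {f : ℝ → ℝ} {s t : Set ℝ} (hs : MeasurableSet s)
    (hf : MonotoneOn f s) (ht : MeasurableSet t) : MeasurableSet (s ∩ f ⁻¹' t) := by
  have hmono : Monotone fun x : s ↦ f x := fun x y hxy ↦ hf x.2 y.2 hxy
  exact Subtype.image_preimage_coe s (f ⁻¹' t) ▸ hs.subtype_image (hmono.measurable ht)

theorem StrictMonoOn.volume_inter_preimage_eq_zero {f : ℝ → ℝ} {s N : Set ℝ}
    (hs : MeasurableSet s) (hf : StrictMonoOn f s)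
    (hd : ∀ᵐ x, x ∈ s → DifferentiableAt ℝ f x ∧ deriv f x ≠ 0) (hN : volume N = 0) :
    volume (s ∩ f ⁻¹' N) = 0 := by
  set G := {x | DifferentiableAt ℝ f x ∧ deriv f x ≠ 0}
  have hG : MeasurableSet G :=
    (measurableSet_of_differentiableAt ℝ f).inter
      ((measurable_deriv f) (measurableSet_singleton 0).compl)
  have hgood : volume (s ∩ f ⁻¹' toMeasurable volume N ∩ G) = 0 := by
    refine volume_eq_zero_of_volume_image_eq_zero
      ((hf.monotoneOn.measurableSet_inter_preimage hs (measurableSet_toMeasurable _ _)).inter hG)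
      (hf.injOn.mono fun x hx ↦ hx.1.1) (fun x hx ↦ hx.2.1) (fun x hx ↦ hx.2.2) ?_
    refine measure_mono_null ?_ ((measure_toMeasurable N).trans hN)
    rintro _ ⟨x, hx, rfl⟩
    exact hx.1.2
  refine measure_mono_null (fun x hx ↦ ?_) (measure_union_null hgood (ae_iff.1 hd))
  by_cases hxG : x ∈ G
  · exact Or.inl ⟨⟨hx.1, subset_toMeasurable _ _ hx.2⟩, hxG⟩
  · exact Or.inr fun h ↦ hxG (h hx.1)

theorem StrictMonoOn.map_restrict_Ioc {f : ℝ → ℝ} {s : Set ℝ} (hs : s.OrdConnected)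
    (hf : StrictMonoOn f s) {x y : ℝ} (hx : x ∈ s) (hy : y ∈ s) :
    (volume.restrict s).map f (Ioc (f x) (f y)) = ENNReal.ofReal (y - x) := by
  have hpre : f ⁻¹' Ioc (f x) (f y) ∩ s = Ioc x y := by
    ext z
    constructor
    · rintro ⟨⟨hxz, hzy⟩, hz⟩
      exact ⟨(hf.lt_iff_lt hx hz).1 hxz, (hf.le_iff_le hz hy).1 hzy⟩
    · intro hz
      have hzs : z ∈ s := hs.out hx hy (Ioc_subset_Icc_self hz)
      exact ⟨⟨(hf.lt_iff_lt hx hzs).2 hz.1, (hf.le_iff_le hzs hy).2 hz.2⟩, hzs⟩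
  rw [Measure.map_apply_of_aemeasurable
      (aemeasurable_restrict_of_monotoneOn hs.measurableSet hf.monotoneOn) measurableSet_Ioc,
    Measure.restrict_apply' hs.measurableSet, hpre, Real.volume_Ioc]

theorem StrictMonoOn.map_restrict_absolutelyContinuous {f : ℝ → ℝ} {s : Set ℝ}
    (hs : MeasurableSet s) (hf : StrictMonoOn f s)
    (hd : ∀ᵐ x, x ∈ s → DifferentiableAt ℝ f x ∧ deriv f x ≠ 0) :
    (volume.restrict s).map f ≪ volume := by
  refine Measure.AbsolutelyContinuous.mk fun N hN hN₀ ↦ ?_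
  rw [Measure.map_apply_of_aemeasurable (aemeasurable_restrict_of_monotoneOn hs hf.monotoneOn) hN,
    Measure.restrict_apply' hs, inter_comm]
  exact hf.volume_inter_preimage_eq_zero hs hd hN₀

theorem stmt_3_general (a b : ℝ) (f f' : ℝ → ℝ)
    (hmono : StrictMonoOn f (Ioo a b))
    (hloc : ∀ x ∈ Ioo a b, ∀ y ∈ Ioo a b, x ≤ y → IntegrableOn f' (Icc x y))
    (hAC : ∀ x ∈ Ioo a b, ∀ y ∈ Ioo a b, x ≤ y → f y - f x = ∫ t in x..y, f' t)
    (hzero : volume {r ∈ Ioo a b | f' r = 0} = 0) :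
    ∃ g g' : ℝ → ℝ,
      (∀ x ∈ Ioo a b, g (f x) = x) ∧
      StrictMonoOn g (f '' Ioo a b) ∧
      ∀ u ∈ f '' Ioo a b, ∀ v ∈ f '' Ioo a b, u ≤ v →
        IntegrableOn g' (Icc u v) ∧ g v - g u = ∫ t in u..v, g' t := by
  have hd : ∀ᵐ x, x ∈ Ioo a b → DifferentiableAt ℝ f x ∧ deriv f x ≠ 0 := by
    have hne : ∀ᵐ x, x ∈ Ioo a b → f' x ≠ 0 := ae_iff.2 (by simpa [and_assoc] using hzero)
    filter_upwards [ae_hasDerivAt_of_sub_eq_intervalIntegral hloc hAC, hne] with x hderiv hne hx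
    exact ⟨(hderiv hx).differentiableAt, (hderiv hx).deriv ▸ hne hx⟩
  set ν := (volume.restrict (Ioo a b)).map f
  have hν : ν ≪ volume := hmono.map_restrict_absolutelyContinuous measurableSet_Ioo hd
  have hinv : ∀ x ∈ Ioo a b, Function.invFunOn f (Ioo a b) (f x) = x := fun x hx ↦
    hmono.injOn.leftInvOn_invFunOn hx
  refine ⟨Function.invFunOn f (Ioo a b), fun t ↦ (ν.rnDeriv volume t).toReal, hinv, ?_, ?_⟩
  · rintro _ ⟨x, hx, rfl⟩ _ ⟨y, hy, rfl⟩ hxy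
    rw [hinv x hx, hinv y hy]
    exact (hmono.lt_iff_lt hx hy).1 hxy
  · rintro _ ⟨x, hx, rfl⟩ _ ⟨y, hy, rfl⟩ hxy
    refine ⟨Measure.integrableOn_toReal_rnDeriv measure_Icc_lt_top.ne, ?_⟩
    rw [intervalIntegral.integral_of_le hxy, Measure.setIntegral_toReal_rnDeriv hν, measureReal_def,
      hmono.map_restrict_Ioc ordConnected_Ioo hx hy, hinv x hx, hinv y hy,
      ENNReal.toReal_ofReal (sub_nonneg.2 ((hmono.le_iff_le hx hy).1 hxy))]

/-- If `f : (a,b) → ℝ` is strictly increasing, absolutely continuous on compact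
subintervals (expressed as being the indefinite integral of its derivative `f'`),
and `{f' = 0}` has Lebesgue measure zero, then the inverse function is strictly
increasing and absolutely continuous on compact subintervals of the image. -/
theorem stmt_3 (a b : ℝ) (hab : a < b) (f f' : ℝ → ℝ)
    (hmono : StrictMonoOn f (Ioo a b))
    (hcont : ContinuousOn f (Ioo a b))
    (hloc : ∀ x ∈ Ioo a b, ∀ y ∈ Ioo a b, x ≤ y → IntegrableOn f' (Icc x y))
    (hAC : ∀ x ∈ Ioo a b, ∀ y ∈ Ioo a b, x ≤ y → f y - f x = ∫ t in x..y, f' t)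
    (hzero : volume {r ∈ Ioo a b | f' r = 0} = 0) :
    ∃ g g' : ℝ → ℝ,
      (∀ x ∈ Ioo a b, g (f x) = x) ∧
      StrictMonoOn g (f '' Ioo a b) ∧
      ∀ u ∈ f '' Ioo a b, ∀ v ∈ f '' Ioo a b, u ≤ v →
        IntegrableOn g' (Icc u v) ∧ g v - g u = ∫ t in u..v, g' t :=
  stmt_3_general a b f f' hmono hloc hAC hzero
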